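/- The fourth moment of distances between points in B(p,N) is exactly M₄(p,N) = (2/45)·N(N+1)(p−1)·[(2N² + 2N)(5p⁵ − 8p⁴ + p³ + 8p² − 21p − 18) − 3(p² − p − 1)²]. -/

import Mathlib

/-- The cyclotomic norm: `‖α‖ = √(Σ_{j=1}^{p−1} Tr(α·ω^j)²)`. -/
noncomputable def cycNorm (p : ℕ) {K : Type*} [Field K] [Algebra ℚ K] (ω : K) (α : K) : ℝ :=
  Real.sqrt (∑ j ∈ Finset.Icc 1 (p - 1), ((Algebra.trace ℚ K (α * ω ^ j) : ℚ) : ℝ) ^ 2)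

/-- The metric induced by the cyclotomic norm: `d(α, β) = ‖α − β‖`. -/
noncomputable def cycDist (p : ℕ) {K : Type*} [Field K] [Algebra ℚ K] (ω : K) (α β : K) : ℝ :=
  cycNorm p ω (α - β)

/-- The box `B(p,N) = {a₁ω + ⋯ + a_{p−1}ω^{p−1} : aᵢ ∈ ℤ, −N ≤ aᵢ ≤ N}` as a finset of `K`. -/
noncomputable def cycBox (p : ℕ) {K : Type*} [Field K] [Algebra ℚ K] (ω : K) (N : ℕ) :
    Finset K :=
  letI := Classical.decEq K
  (Fintype.piFinset fun _ : Fin (p - 1) => Finset.Icc (-(N : ℤ)) (N : ℤ)).image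
    fun a => ∑ i : Fin (p - 1), (a i : K) * ω ^ ((i : ℕ) + 1)

/-!
Writing `α = Σ cᵢ ωⁱ⁺¹` with `S = Σ cᵢ` and `Q = Σ cᵢ²`, the traces `Tr(ωᵉ) = p·[p ∣ e] − 1` give
`Tr(α ω^(p−1−i)) = p cᵢ − S`, hence `‖α‖² = p² Q − (p+1) S²`. The map `c ↦ α` is injective, so
`M₄` is the average of `(p² Q − (p+1) S²)²` over `c = a − b` with `a, b` independent and uniform
in `[−N, N]^(p−1)`. The coordinates of `c` are i.i.d. and symmetric, so only their second and
fourth moments `μ₂ = 2N(N+1)/3` and `μ₄ = 2N(N+1)(8N(N+1)−1)/15` enter, through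
`E[Q²] = E[Q S²] = n μ₄ + n(n−1) μ₂²` and `E[S⁴] = n μ₄ + 3n(n−1) μ₂²` for `n = p − 1`.
-/

open Finset Polynomial

theorem Finset.sum_Icc_one_eq_sum_fin_rev {M : Type*} [AddCommMonoid M] (n : ℕ) (f : ℕ → M) :
    ∑ j ∈ Icc 1 n, f j = ∑ i : Fin n, f (n - i) := by
  symm
  refine sum_nbij (fun i : Fin n => n - i) (fun i _ => ?_) (fun i _ i' _ h => ?_)
    (fun j hj => ?_) (fun _ _ => rfl)
  · simp only [mem_Icc]; omega
  · simp only at h; omega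
  · simp only [coe_Icc, Set.mem_Icc] at hj
    exact ⟨⟨n - j, by omega⟩, by simp, by simp; omega⟩

theorem Fintype.sum_piFinset_fin_succ {γ M : Type*} [DecidableEq γ] [AddCommMonoid M]
    (V : Finset γ) (n : ℕ) (f : (Fin (n + 1) → γ) → M) :
    ∑ z ∈ piFinset (fun _ => V), f z =
      ∑ v ∈ V, ∑ z ∈ piFinset (fun _ : Fin n => V), f (Fin.cons v z) := by
  rw [← sum_product']
  refine sum_nbij' (fun z => (z 0, Fin.tail z)) (fun q => Fin.cons q.1 q.2) ?_ ?_
    (fun z _ => Fin.cons_self_tail z) (fun q _ => by simp) (fun z _ => by rw [Fin.cons_self_tail])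
  · intro z hz
    simp only [mem_piFinset, mem_product] at hz ⊢
    exact ⟨hz 0, fun i => hz i.succ⟩
  · intro q hq
    simp only [mem_piFinset, mem_product] at hq ⊢
    exact Fin.cases hq.1 hq.2

theorem Fintype.sum_piFinset_sum_piFinset {ι α β M : Type*} [Fintype ι] [DecidableEq ι]
    [AddCommMonoid M] (s : Finset α) (t : Finset β) (f : (ι → α) → (ι → β) → M) :
    ∑ a ∈ piFinset (fun _ => s), ∑ b ∈ piFinset (fun _ => t), f a b =
      ∑ z ∈ piFinset (fun _ => s ×ˢ t), f (Prod.fst ∘ z) (Prod.snd ∘ z) := by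
  rw [← sum_product']
  refine sum_nbij' (fun q i => (q.1 i, q.2 i)) (fun z => (Prod.fst ∘ z, Prod.snd ∘ z))
    ?_ ?_ (fun _ _ => rfl) (fun _ _ => rfl) (fun _ _ => rfl)
  · intro q hq
    simp only [mem_piFinset, mem_product] at hq ⊢
    exact fun i => ⟨hq.1 i, hq.2 i⟩
  · intro z hz
    simp only [mem_piFinset, mem_product] at hz ⊢
    exact ⟨fun i => (hz i).1, fun i => (hz i).2⟩

section ProductMoments

/-! A hypothesis `Σ_{v ∈ V} f v = #V * μ` says that `f` has mean `μ` on `V`, so the sums over `Vⁿ`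
below are `#Vⁿ` times expectations for i.i.d. uniform coordinates. In the inductions on `n`, the
terms linear in `t v` or in `Σ t (zᵢ)` vanish because `t` has mean zero. -/

variable {γ : Type*} [DecidableEq γ] (V : Finset γ)

lemma sum_piFinset_sum_apply (f : γ → ℝ) {μ : ℝ} (hf : ∑ v ∈ V, f v = #V * μ) (n : ℕ) :
    ∑ z ∈ Fintype.piFinset (fun _ : Fin n => V), ∑ i, f (z i) = #V ^ n * (n * μ) := by
  induction n with
  | zero => simp
  | succ n ih =>
    rw [Fintype.sum_piFinset_fin_succ]
    simp only [Fin.sum_univ_succ, Fin.cons_zero, Fin.cons_succ, sum_add_distrib, sum_const,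
      Fintype.card_piFinset_const, nsmul_eq_mul, ih, ← mul_sum, hf]
    push_cast
    ring

lemma sum_piFinset_sum_apply_mul_sum_apply (f g : γ → ℝ) {μf μg μfg : ℝ}
    (hf : ∑ v ∈ V, f v = #V * μf) (hg : ∑ v ∈ V, g v = #V * μg)
    (hfg : ∑ v ∈ V, f v * g v = #V * μfg) (n : ℕ) :
    ∑ z ∈ Fintype.piFinset (fun _ : Fin n => V), (∑ i, f (z i)) * ∑ i, g (z i) =
      #V ^ n * (n * μfg + n * (n - 1) * μf * μg) := by
  induction n with
  | zero => simp
  | succ n ih =>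
    rw [Fintype.sum_piFinset_fin_succ]
    simp only [Fin.sum_univ_succ, Fin.cons_zero, Fin.cons_succ, add_mul, mul_add, sum_add_distrib,
      sum_const, Fintype.card_piFinset_const, nsmul_eq_mul, ih, ← sum_mul, ← mul_sum,
      sum_piFinset_sum_apply V f hf, sum_piFinset_sum_apply V g hg, hf, hg, hfg]
    push_cast
    ring

variable (t : γ → ℝ) {μ₂ μ₄ : ℝ}

lemma sum_piFinset_sum_apply_sq (h₁ : ∑ v ∈ V, t v = 0) (h₂ : ∑ v ∈ V, t v ^ 2 = #V * μ₂) (n : ℕ) :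
    ∑ z ∈ Fintype.piFinset (fun _ : Fin n => V), (∑ i, t (z i)) ^ 2 = #V ^ n * (n * μ₂) := by
  have h₁' : ∑ v ∈ V, t v = #V * 0 := by rw [h₁, mul_zero]
  simpa [← sq] using
    sum_piFinset_sum_apply_mul_sum_apply V t t h₁' h₁' (by simpa only [← sq] using h₂) n

lemma sum_piFinset_sum_apply_sq_mul_sum_sq_apply
    (h₁ : ∑ v ∈ V, t v = 0) (h₂ : ∑ v ∈ V, t v ^ 2 = #V * μ₂)
    (h₄ : ∑ v ∈ V, t v ^ 4 = #V * μ₄) (n : ℕ) :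
    ∑ z ∈ Fintype.piFinset (fun _ : Fin n => V), (∑ i, t (z i)) ^ 2 * ∑ i, t (z i) ^ 2 =
      #V ^ n * (n * μ₄ + n * (n - 1) * μ₂ ^ 2) := by
  have hS := sum_piFinset_sum_apply V t (μ := 0) (by rw [h₁, mul_zero])
  have hQ := sum_piFinset_sum_apply V (t · ^ 2) h₂
  induction n with
  | zero => simp
  | succ n ih =>
    rw [Fintype.sum_piFinset_fin_succ]
    simp only [Fin.sum_univ_succ, Fin.cons_zero, Fin.cons_succ, add_sq, add_mul, mul_add,
      mul_assoc, sum_add_distrib, sum_const, Fintype.card_piFinset_const, nsmul_eq_mul, ih,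
      ← sum_mul, ← mul_sum, hS, hQ, sum_piFinset_sum_apply_sq V t h₁ h₂, ← pow_add, h₁, h₂, h₄,
      zero_mul, mul_zero]
    push_cast
    ring

lemma sum_piFinset_sum_apply_pow_four
    (h₁ : ∑ v ∈ V, t v = 0) (h₂ : ∑ v ∈ V, t v ^ 2 = #V * μ₂)
    (h₄ : ∑ v ∈ V, t v ^ 4 = #V * μ₄) (n : ℕ) :
    ∑ z ∈ Fintype.piFinset (fun _ : Fin n => V), (∑ i, t (z i)) ^ 4 =
      #V ^ n * (n * μ₄ + 3 * n * (n - 1) * μ₂ ^ 2) := by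
  have hS := sum_piFinset_sum_apply V t (μ := 0) (by rw [h₁, mul_zero])
  have hexp : ∀ a b : ℝ, (a + b) ^ 4 =
      a ^ 4 + 4 * (a ^ 3 * b) + 6 * (a ^ 2 * b ^ 2) + 4 * (a * b ^ 3) + b ^ 4 := fun a b => by ring
  induction n with
  | zero => simp
  | succ n ih =>
    rw [Fintype.sum_piFinset_fin_succ]
    simp only [Fin.sum_univ_succ, Fin.cons_zero, Fin.cons_succ, hexp, sum_add_distrib, sum_const,
      Fintype.card_piFinset_const, nsmul_eq_mul, ih, ← sum_mul, ← mul_sum, hS,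
      sum_piFinset_sum_apply_sq V t h₁ h₂, h₁, h₂, h₄, zero_mul, mul_zero]
    push_cast
    ring

lemma sum_piFinset_sq_mul_sum_sq_apply_sub_mul_sq_sum_apply
    (h₁ : ∑ v ∈ V, t v = 0) (h₂ : ∑ v ∈ V, t v ^ 2 = #V * μ₂)
    (h₄ : ∑ v ∈ V, t v ^ 4 = #V * μ₄) (a b : ℝ) (n : ℕ) :
    ∑ z ∈ Fintype.piFinset (fun _ : Fin n => V),
        (a * ∑ i, t (z i) ^ 2 - b * (∑ i, t (z i)) ^ 2) ^ 2 =
      #V ^ n * ((a - b) ^ 2 * n * μ₄ + (a ^ 2 - 2 * a * b + 3 * b ^ 2) * n * (n - 1) * μ₂ ^ 2) := by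
  have hQ2 := sum_piFinset_sum_apply_mul_sum_apply V (t · ^ 2) (t · ^ 2) h₂ h₂
    (by simpa only [← pow_add] using h₄) n
  simp only [← sq] at hQ2
  have hexp : ∀ z : Fin n → γ, (a * ∑ i, t (z i) ^ 2 - b * (∑ i, t (z i)) ^ 2) ^ 2 =
      a ^ 2 * (∑ i, t (z i) ^ 2) ^ 2 - 2 * a * b * ((∑ i, t (z i)) ^ 2 * ∑ i, t (z i) ^ 2)
        + b ^ 2 * (∑ i, t (z i)) ^ 4 := fun z => by ring
  simp only [hexp, sum_add_distrib, sum_sub_distrib, ← mul_sum, hQ2,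
    sum_piFinset_sum_apply_sq_mul_sum_sq_apply V t h₁ h₂ h₄,
    sum_piFinset_sum_apply_pow_four V t h₁ h₂ h₄]
  ring

end ProductMoments

section DifferenceMoments

variable {α : Type*} (s : Finset α) (u : α → ℝ)

lemma sum_product_sub : ∑ v ∈ s ×ˢ s, (u v.1 - u v.2) = 0 := by
  simp only [sum_product, sum_sub_distrib, sum_const, nsmul_eq_mul, ← mul_sum]
  ring

lemma sum_product_sub_sq :
    ∑ v ∈ s ×ˢ s, (u v.1 - u v.2) ^ 2 = 2 * #s * ∑ x ∈ s, u x ^ 2 - 2 * (∑ x ∈ s, u x) ^ 2 := by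
  simp only [sum_product, sub_sq, sum_add_distrib, sum_sub_distrib, sum_const, nsmul_eq_mul,
    mul_assoc, ← mul_sum, ← sum_mul]
  ring

lemma sum_product_sub_pow_four :
    ∑ v ∈ s ×ˢ s, (u v.1 - u v.2) ^ 4 = 2 * #s * ∑ x ∈ s, u x ^ 4
      - 8 * (∑ x ∈ s, u x) * ∑ x ∈ s, u x ^ 3 + 6 * (∑ x ∈ s, u x ^ 2) ^ 2 := by
  have hexp : ∀ a b : ℝ, (a - b) ^ 4 =
      a ^ 4 - 4 * (a ^ 3 * b) + 6 * (a ^ 2 * b ^ 2) - 4 * (a * b ^ 3) + b ^ 4 := fun a b => by ring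
  simp only [sum_product, hexp, sum_add_distrib, sum_sub_distrib, sum_const, nsmul_eq_mul,
    ← mul_sum, ← sum_mul]
  ring

end DifferenceMoments

section SymmetricInterval

lemma card_Icc_neg (N : ℕ) : (#(Icc (-(N : ℤ)) N) : ℝ) = 2 * N + 1 := by
  rw [Int.card_Icc, show (N : ℤ) + 1 - -N = ((2 * N + 1 : ℕ) : ℤ) by push_cast; ring,
    Int.toNat_natCast]
  push_cast
  ring

lemma sum_Icc_neg_succ (N : ℕ) (f : ℤ → ℝ) :
    ∑ x ∈ Icc (-(N + 1 : ℤ)) (N + 1), f x =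
      f (-(N + 1)) + f (N + 1) + ∑ x ∈ Icc (-(N : ℤ)) N, f x := by
  have h : Icc (-(N + 1 : ℤ)) (N + 1) =
      insert (-(N + 1 : ℤ)) (insert (N + 1 : ℤ) (Icc (-(N : ℤ)) N)) := by
    ext x; simp only [mem_Icc, mem_insert]; omega
  rw [h, sum_insert (by simp only [mem_insert, mem_Icc]; omega),
    sum_insert (by simp only [mem_Icc]; omega), add_assoc]

lemma sum_Icc_neg (N : ℕ) : ∑ x ∈ Icc (-(N : ℤ)) N, (x : ℝ) = 0 := by
  induction N with
  | zero => simp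
  | succ N ih =>
    push_cast
    rw [sum_Icc_neg_succ, ih]
    push_cast
    ring

lemma sum_Icc_neg_sq (N : ℕ) :
    ∑ x ∈ Icc (-(N : ℤ)) N, (x : ℝ) ^ 2 = N * (N + 1) * (2 * N + 1) / 3 := by
  induction N with
  | zero => simp
  | succ N ih =>
    push_cast
    rw [sum_Icc_neg_succ, ih]
    push_cast
    ring

lemma sum_Icc_neg_pow_four (N : ℕ) :
    ∑ x ∈ Icc (-(N : ℤ)) N, (x : ℝ) ^ 4 =
      N * (N + 1) * (2 * N + 1) * (3 * N ^ 2 + 3 * N - 1) / 15 := by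
  induction N with
  | zero => simp
  | succ N ih =>
    push_cast
    rw [sum_Icc_neg_succ, ih]
    push_cast
    ring

lemma sum_Icc_neg_product_sub_sq (N : ℕ) :
    ∑ v ∈ Icc (-(N : ℤ)) N ×ˢ Icc (-(N : ℤ)) N, ((v.1 : ℝ) - v.2) ^ 2 =
      #(Icc (-(N : ℤ)) N ×ˢ Icc (-(N : ℤ)) N) * (2 * N * (N + 1) / 3) := by
  rw [sum_product_sub_sq _ (fun x : ℤ => (x : ℝ)), sum_Icc_neg_sq, sum_Icc_neg, card_product]
  push_cast
  rw [card_Icc_neg]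
  ring

lemma sum_Icc_neg_product_sub_pow_four (N : ℕ) :
    ∑ v ∈ Icc (-(N : ℤ)) N ×ˢ Icc (-(N : ℤ)) N, ((v.1 : ℝ) - v.2) ^ 4 =
      #(Icc (-(N : ℤ)) N ×ˢ Icc (-(N : ℤ)) N) * (2 * N * (N + 1) * (8 * N * (N + 1) - 1) / 15) := by
  rw [sum_product_sub_pow_four _ (fun x : ℤ => (x : ℝ)), sum_Icc_neg_sq, sum_Icc_neg_pow_four,
    sum_Icc_neg, card_product]
  push_cast
  rw [card_Icc_neg]
  ring

end SymmetricInterval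

lemma nextCoeff_cyclotomic_prime {p : ℕ} (hp : p.Prime) : (cyclotomic p ℚ).nextCoeff = 1 := by
  have := Fact.mk hp
  have hp2 := hp.two_le
  rw [nextCoeff, natDegree_cyclotomic, Nat.totient_prime hp, if_neg (by omega), cyclotomic_prime,
    finsetSum_coeff]
  simp only [coeff_X_pow, sum_ite_eq, mem_range]
  rw [if_pos (by omega)]

/-- The coordinate `c i` is the coefficient of `ω ^ (i + 1)`, i.e. `aᵢ₊₁` in the notation of
`B(p,N)`. -/
def cycEmbed (p : ℕ) {K : Type*} [Ring K] (ω : K) (c : Fin (p - 1) → ℤ) : K :=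
  ∑ i, (c i : K) * ω ^ ((i : ℕ) + 1)

lemma cycEmbed_sub {p : ℕ} {K : Type*} [Ring K] (ω : K) (a b : Fin (p - 1) → ℤ) :
    cycEmbed p ω a - cycEmbed p ω b = cycEmbed p ω (a - b) := by
  simp only [cycEmbed, ← sum_sub_distrib, Pi.sub_apply, Int.cast_sub, sub_mul]

section Box

variable {K : Type*} [Field K] [Algebra ℚ K] {p : ℕ} {ω : K}

lemma cycEmbed_injective (hp : p.Prime) (hω : IsPrimitiveRoot ω p) :
    Function.Injective (cycEmbed p ω) := by
  have := Fact.mk hp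
  have hdeg : (minpoly ℚ ω).natDegree = p - 1 := by
    rw [← hω.minpoly_eq_cyclotomic_of_irreducible (cyclotomic.irreducible_rat hp.pos),
      natDegree_cyclotomic, Nat.totient_prime hp]
  have hli := linearIndependent_pow (K := ℚ) ω
  rw [hdeg] at hli
  have hcomb : cycEmbed p ω =
      (ω * ·) ∘ Fintype.linearCombination ℤ (fun i : Fin (p - 1) => ω ^ (i : ℕ)) := by
    ext c
    simp only [cycEmbed, Function.comp_apply, Fintype.linearCombination_apply, mul_sum,
      zsmul_eq_mul]
    exact sum_congr rfl fun i _ => by ring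
  rw [hcomb]
  exact (mul_right_injective₀ (hω.ne_zero hp.ne_zero)).comp
    (hli.restrict_scalars' (R := ℤ)).fintypeLinearCombination_injective

lemma cycBox_eq_image (N : ℕ) :
    cycBox p ω N = letI := Classical.decEq K;
      (Fintype.piFinset fun _ : Fin (p - 1) => Icc (-(N : ℤ)) N).image (cycEmbed p ω) :=
  rfl

lemma sum_cycBox (hp : p.Prime) (hω : IsPrimitiveRoot ω p) (N : ℕ) (F : K → ℝ) :
    ∑ α ∈ cycBox p ω N, F α =
      ∑ a ∈ Fintype.piFinset (fun _ : Fin (p - 1) => Icc (-(N : ℤ)) N), F (cycEmbed p ω a) := by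
  classical
  rw [cycBox_eq_image]
  exact sum_image fun _ _ _ _ h => cycEmbed_injective hp hω h

lemma card_cycBox (hp : p.Prime) (hω : IsPrimitiveRoot ω p) (N : ℕ) :
    (#(cycBox p ω N) : ℝ) = (2 * N + 1) ^ (p - 1) := by
  classical
  rw [cycBox_eq_image, card_image_of_injective _ (cycEmbed_injective hp hω),
    Fintype.card_piFinset_const]
  push_cast
  rw [card_Icc_neg]

end Box

section Trace

variable {K : Type*} [Field K] [Algebra ℚ K] {p : ℕ} [IsCyclotomicExtension {p} ℚ K] {ω : K}

lemma IsPrimitiveRoot.trace_eq_neg_one_of_prime (hp : p.Prime) {ζ : K}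
    (hζ : IsPrimitiveRoot ζ p) : Algebra.trace ℚ K ζ = -1 := by
  have := Fact.mk hp
  have h := (hζ.powerBasis ℚ).trace_gen_eq_nextCoeff_minpoly
  rwa [IsPrimitiveRoot.powerBasis_gen,
    ← hζ.minpoly_eq_cyclotomic_of_irreducible (cyclotomic.irreducible_rat hp.pos),
    nextCoeff_cyclotomic_prime hp] at h

lemma trace_one_of_prime (hp : p.Prime) : Algebra.trace ℚ K 1 = p - 1 := by
  have := Fact.mk hp
  rw [← map_one (algebraMap ℚ K), Algebra.trace_algebraMap,
    IsCyclotomicExtension.finrank K (cyclotomic.irreducible_rat hp.pos), Nat.totient_prime hp,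
    nsmul_one, Nat.cast_pred hp.pos]

lemma IsPrimitiveRoot.trace_pow_of_prime (hp : p.Prime) (hω : IsPrimitiveRoot ω p) (e : ℕ) :
    Algebra.trace ℚ K (ω ^ e) = (if p ∣ e then (p : ℚ) else 0) - 1 := by
  split_ifs with h
  · rw [(hω.pow_eq_one_iff_dvd e).mpr h, trace_one_of_prime hp]
  · have hcop : e.Coprime p := Nat.coprime_comm.mp (hp.coprime_iff_not_dvd.mpr h)
    rw [(hω.pow_of_coprime e hcop).trace_eq_neg_one_of_prime hp]
    ring

lemma trace_cycEmbed_mul_pow (hp : p.Prime) (hω : IsPrimitiveRoot ω p) (c : Fin (p - 1) → ℤ)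
    {i₀ : Fin (p - 1)} {j : ℕ} (hj : (i₀ : ℕ) + 1 + j = p) :
    Algebra.trace ℚ K (cycEmbed p ω c * ω ^ j) = p * c i₀ - ∑ i, (c i : ℚ) := by
  have hdvd : ∀ i : Fin (p - 1), p ∣ (i : ℕ) + 1 + j ↔ i = i₀ := fun i =>
    ⟨fun h => Fin.ext (by have := Nat.eq_of_dvd_of_lt_two_mul (by omega) h (by omega); omega),
      fun h => by rw [h, hj]⟩
  have hsmul : cycEmbed p ω c * ω ^ j = ∑ i, (c i : ℚ) • ω ^ ((i : ℕ) + 1 + j) := by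
    simp only [cycEmbed, sum_mul, Algebra.smul_def, map_intCast, pow_add, mul_assoc]
  simp only [hsmul, map_sum, map_smul, hω.trace_pow_of_prime hp, hdvd, smul_eq_mul, mul_sub,
    mul_one, mul_ite, mul_zero, sum_sub_distrib, sum_ite_eq', mem_univ, if_true]
  ring

lemma cycNorm_cycEmbed_sq (hp : p.Prime) (hω : IsPrimitiveRoot ω p) (c : Fin (p - 1) → ℤ) :
    cycNorm p ω (cycEmbed p ω c) ^ 2 =
      p ^ 2 * ∑ i, (c i : ℝ) ^ 2 - (p + 1) * (∑ i, (c i : ℝ)) ^ 2 := by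
  have htr : ∀ i : Fin (p - 1), Algebra.trace ℚ K (cycEmbed p ω c * ω ^ (p - 1 - i)) =
      p * c i - ∑ i, (c i : ℚ) := fun i => trace_cycEmbed_mul_pow hp hω c (by omega)
  rw [cycNorm, Real.sq_sqrt (by positivity), sum_Icc_one_eq_sum_fin_rev]
  simp only [htr]
  push_cast
  simp only [sub_sq, sum_add_distrib, sum_sub_distrib, mul_pow, ← mul_sum, ← sum_mul, sum_const,
    card_univ, Fintype.card_fin, nsmul_eq_mul, Nat.cast_pred hp.pos]
  ring

lemma cycDist_cycEmbed_pow_four (hp : p.Prime) (hω : IsPrimitiveRoot ω p)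
    (a b : Fin (p - 1) → ℤ) :
    cycDist p ω (cycEmbed p ω a) (cycEmbed p ω b) ^ 4 =
      (p ^ 2 * ∑ i, ((a i : ℝ) - b i) ^ 2 - (p + 1) * (∑ i, ((a i : ℝ) - b i)) ^ 2) ^ 2 := by
  rw [cycDist, cycEmbed_sub, show 4 = 2 * 2 from rfl, pow_mul, cycNorm_cycEmbed_sq hp hω]
  simp only [Pi.sub_apply, Int.cast_sub]

end Trace

theorem stmt12_general (p : ℕ+) (hp : (p : ℕ).Prime)
    (K : Type*) [Field K] [Algebra ℚ K] [IsCyclotomicExtension {(p : ℕ)} ℚ K]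
    (ω : K) (hω : IsPrimitiveRoot ω p) (N : ℕ) :
    (1 / ((cycBox p ω N).card : ℝ) ^ 2) *
      ∑ α ∈ cycBox p ω N, ∑ β ∈ cycBox p ω N, (cycDist p ω α β) ^ 4
      = (2 / 45) * N * (N + 1) * ((p : ℝ) - 1) *
          ((2 * (N : ℝ) ^ 2 + 2 * N) *
              (5 * (p : ℝ) ^ 5 - 8 * (p : ℝ) ^ 4 + (p : ℝ) ^ 3 + 8 * (p : ℝ) ^ 2
                - 21 * (p : ℝ) - 18)
            - 3 * ((p : ℝ) ^ 2 - (p : ℝ) - 1) ^ 2) := by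
  set D := Icc (-(N : ℤ)) N
  simp only [sum_cycBox hp hω, cycDist_cycEmbed_pow_four hp hω]
  rw [Fintype.sum_piFinset_sum_piFinset]
  simp only [Function.comp_apply]
  rw [sum_piFinset_sq_mul_sum_sq_apply_sub_mul_sq_sum_apply (D ×ˢ D) (fun v => (v.1 : ℝ) - v.2)
      (sum_product_sub D _) (sum_Icc_neg_product_sub_sq N) (sum_Icc_neg_product_sub_pow_four N),
    card_cycBox hp hω, card_product, Nat.cast_mul, card_Icc_neg, mul_pow, Nat.cast_pred hp.pos]
  field_simp
  ring

/-- The fourth moment of distances between points of `B(p,N)`: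
`M₄(p,N) = (2/45)·N(N+1)(p−1)·[(2N²+2N)(5p⁵−8p⁴+p³+8p²−21p−18) − 3(p²−p−1)²]`. -/
theorem stmt12 (p : ℕ+) (hp : (p : ℕ).Prime) (hodd : Odd (p : ℕ))
    (K : Type*) [Field K] [Algebra ℚ K] [IsCyclotomicExtension {(p : ℕ)} ℚ K]
    (ω : K) (hω : IsPrimitiveRoot ω p) (N : ℕ) (hN : 0 < N) :
    (1 / ((cycBox p ω N).card : ℝ) ^ 2) *
      ∑ α ∈ cycBox p ω N, ∑ β ∈ cycBox p ω N, (cycDist p ω α β) ^ 4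
      = (2 / 45) * N * (N + 1) * ((p : ℝ) - 1) *
          ((2 * (N : ℝ) ^ 2 + 2 * N) *
              (5 * (p : ℝ) ^ 5 - 8 * (p : ℝ) ^ 4 + (p : ℝ) ^ 3 + 8 * (p : ℝ) ^ 2
                - 21 * (p : ℝ) - 18)
            - 3 * ((p : ℝ) ^ 2 - (p : ℝ) - 1) ^ 2) :=
  stmt12_general p hp K ω hω N
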